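/- arXiv:2312.06603 — 2 statements merged into one kernel-verified Lean document; each statement's English description precedes it below -/
import Mathlib

section
/- There exist seven points v₀, …, v₆ of the Euclidean plane in general position (pairwise distinct, no three collinear) such that in the closed polygon with segments sᵢ = [vᵢ, v_{(i+1) mod 7}], every pair of non-adjacent segments (indices with j ≢ i, i±1 (mod 7)) has nonempty intersection; that is, the polygon attains all 14 = 7·(7−3)/2 possible crossings. -/
/-!
Take the `{7/3}` star heptagon, rounded to integer points. Two sides `[a, b]` and `[c, d]` cross
as soon as `c, d` lie strictly on opposite sides of the line `ab` and `a, b` strictly on opposite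
sides of the line `cd`; this, and the non-vanishing of all orientation determinants (general
position), is a finite computation with integers.
-/

open Set

def orient {R : Type*} [CommRing R] (a b c : R × R) : R :=
  (b.1 - a.1) * (c.2 - a.2) - (b.2 - a.2) * (c.1 - a.1)

noncomputable def toPlane (p : ℝ × ℝ) : EuclideanSpace ℝ (Fin 2) := !₂[p.1, p.2]

@[simp] lemma toPlane_apply_zero (p : ℝ × ℝ) : toPlane p 0 = p.1 := rfl

@[simp] lemma toPlane_apply_one (p : ℝ × ℝ) : toPlane p 1 = p.2 := rfl

lemma toPlane_injective : Function.Injective toPlane := fun p q h =>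
  Prod.ext (by simpa using congrArg (· 0) h) (by simpa using congrArg (· 1) h)

lemma not_collinear_of_orient_ne_zero {a b c : ℝ × ℝ} (h : orient a b c ≠ 0) :
    ¬ Collinear ℝ ({toPlane a, toPlane b, toPlane c} : Set (EuclideanSpace ℝ (Fin 2))) := by
  intro hcol
  obtain ⟨w, hw⟩ := (collinear_iff_of_mem (mem_insert _ _)).1 hcol
  obtain ⟨s, hs⟩ := hw (toPlane b) (by simp)
  obtain ⟨t, ht⟩ := hw (toPlane c) (by simp)
  have hs0 := congrArg (· 0) hs
  have hs1 := congrArg (· 1) hs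
  have ht0 := congrArg (· 0) ht
  have ht1 := congrArg (· 1) ht
  simp only [toPlane_apply_zero, toPlane_apply_one, vadd_eq_add, PiLp.add_apply,
    PiLp.smul_apply, smul_eq_mul] at hs0 hs1 ht0 ht1
  apply h
  unfold orient
  rw [hs0, hs1, ht0, ht1]
  ring

lemma sub_ne_zero_of_mul_neg {α β : ℝ} (h : α * β < 0) : α - β ≠ 0 := fun h0 => by
  rw [sub_eq_zero.1 h0] at h
  nlinarith [mul_self_nonneg β]

lemma div_sub_mem_Icc_of_mul_neg {α β : ℝ} (h : α * β < 0) :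
    α / (α - β) ∈ Icc (0 : ℝ) 1 := by
  have hden : 0 < α ^ 2 - α * β := by nlinarith [sq_nonneg α]
  have hα : α ≠ 0 := by
    rintro rfl
    simp at h
  have key : α / (α - β) = α ^ 2 / (α ^ 2 - α * β) := by
    field_simp
  rw [key]
  exact ⟨by positivity, (div_le_one hden).2 (by linarith)⟩

/-- Since `orient c d ·` is affine, it vanishes on the line `ab` at the parameter
`orient c d a / (orient c d a - orient c d b)`, which lies in `[0, 1]` by the sign condition. -/
lemma segment_inter_nonempty_of_orient_mul_neg {a b c d : ℝ × ℝ}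
    (hab : orient a b c * orient a b d < 0) (hcd : orient c d a * orient c d b < 0) :
    (segment ℝ (toPlane a) (toPlane b) ∩ segment ℝ (toPlane c) (toPlane d)).Nonempty := by
  have ht := div_sub_mem_Icc_of_mul_neg hcd
  have hu := div_sub_mem_Icc_of_mul_neg hab
  have hne := sub_ne_zero_of_mul_neg hcd
  have hne' := sub_ne_zero_of_mul_neg hab
  refine ⟨_, lineMap_mem_segment ℝ _ _ ht, ?_⟩
  convert lineMap_mem_segment ℝ _ _ hu using 1
  ext i
  fin_cases i <;>
    simp only [AffineMap.lineMap_apply_module, PiLp.add_apply, PiLp.smul_apply, smul_eq_mul,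
      Fin.zero_eta, Fin.mk_one, toPlane_apply_zero, toPlane_apply_one] <;>
    field_simp <;> unfold orient <;> ring

lemma orient_map_intCast (a b c : ℤ × ℤ) :
    orient (Prod.map Int.cast Int.cast a) (Prod.map Int.cast Int.cast b)
      (Prod.map Int.cast Int.cast c) = ((orient a b c : ℤ) : ℝ) := by
  simp [orient]

lemma prod_map_intCast_injective :
    Function.Injective (Prod.map Int.cast Int.cast : ℤ × ℤ → ℝ × ℝ) :=
  Int.cast_injective.prodMap Int.cast_injective

/-- The vertex `k` is `10 (cos (6πk/7), sin (6πk/7))`, rounded. -/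
def heptagram : Fin 7 → ℤ × ℤ :=
  ![(10, 0), (-9, 4), (6, -8), (-2, 10), (-2, -10), (6, 8), (-9, -4)]

lemma heptagram_injective : Function.Injective heptagram := by decide

lemma orient_heptagram_ne_zero : ∀ i j k : Fin 7, i ≠ j → j ≠ k → i ≠ k →
    orient (heptagram i) (heptagram j) (heptagram k) ≠ 0 := by decide

lemma orient_heptagram_side_mul_neg : ∀ i j : Fin 7, j ≠ i → j ≠ i + 1 → i ≠ j + 1 →
    orient (heptagram i) (heptagram (i + 1)) (heptagram j) *
      orient (heptagram i) (heptagram (i + 1)) (heptagram (j + 1)) < 0 := by decide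

/-- There exist seven points in general position in the plane whose closed polygon attains
all `7·(7−3)/2 = 14` possible crossings: every pair of non-adjacent sides intersects. -/
theorem exists_heptagon_all_crossings :
    ∃ v : Fin 7 → EuclideanSpace ℝ (Fin 2),
      (∀ i j : Fin 7, i ≠ j → v i ≠ v j) ∧
      (∀ i j k : Fin 7, i ≠ j → j ≠ k → i ≠ k →
        ¬ Collinear ℝ ({v i, v j, v k} : Set (EuclideanSpace ℝ (Fin 2)))) ∧
      (∀ i j : Fin 7, j ≠ i → j ≠ i + 1 → i ≠ j + 1 →
        (segment ℝ (v i) (v (i + 1)) ∩ segment ℝ (v j) (v (j + 1))).Nonempty) := by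
  refine ⟨fun i => toPlane (Prod.map Int.cast Int.cast (heptagram i)), ?_, ?_, ?_⟩
  · exact fun i j hij =>
      (toPlane_injective.comp (prod_map_intCast_injective.comp heptagram_injective)).ne hij
  · intro i j k hij hjk hik
    apply not_collinear_of_orient_ne_zero
    rw [orient_map_intCast]
    exact_mod_cast orient_heptagram_ne_zero i j k hij hjk hik
  · intro i j hji hji' hij'
    apply segment_inter_nonempty_of_orient_mul_neg
    · rw [orient_map_intCast, orient_map_intCast]
      exact_mod_cast orient_heptagram_side_mul_neg i j hji hji' hij'
    · rw [orient_map_intCast, orient_map_intCast]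
      exact_mod_cast orient_heptagram_side_mul_neg j i hji.symm hij' hji'
end

section
/- There exist six points x, a, b, c, d, e of the Euclidean plane in general position (pairwise distinct, no three collinear) such that the seven segments of the bouquet configuration consisting of the triangle loop [x,a], [a,b], [b,x] and the quadrilateral loop [x,c], [c,d], [d,e], [e,x] have at least 7 crossing pairs, i.e., at least 7 unordered pairs of segments that share no endpoint and have nonempty intersection. -/
/-!
The six points `x, a, b, c, d, e` are taken to be `(0,0), (0,-1), (-2,6), (-1,1), (6,5), (-3,4)`.
Then the triangle stick `[a,b]` meets all four sticks of the quadrilateral loop, `[b,x]` meets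
`[c,d]` and `[d,e]`, and the quadrilateral loop crosses itself once, `[c,d]` with `[e,x]`.
General position is checked by nonvanishing 2×2 determinants, and distinctness follows from it.
-/

/-- The closed segment spanned by a pair of points of the Euclidean plane. -/
def segOf (p : EuclideanSpace ℝ (Fin 2) × EuclideanSpace ℝ (Fin 2)) :
    Set (EuclideanSpace ℝ (Fin 2)) :=
  segment ℝ p.1 p.2

/-- Two segments (given by their endpoint pairs) share an endpoint. -/
def SharesEndpoint (p q : EuclideanSpace ℝ (Fin 2) × EuclideanSpace ℝ (Fin 2)) : Prop :=
  p.1 = q.1 ∨ p.1 = q.2 ∨ p.2 = q.1 ∨ p.2 = q.2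

open Set AffineMap

local notation "ℝ²" => EuclideanSpace ℝ (Fin 2)

theorem Function.Injective.of_forall_not_collinear {k V P ι : Type*} [DivisionRing k]
    [AddCommGroup V] [Module k V] [AddTorsor V P] [Fintype ι] (hcard : 2 < Fintype.card ι)
    {v : ι → P} (h : ∀ i j l, i ≠ j → j ≠ l → i ≠ l → ¬Collinear k {v i, v j, v l}) :
    Function.Injective v := by
  classical
  intro i j hv
  by_contra hij
  obtain ⟨l, -, hl⟩ := Finset.exists_mem_notMem_of_card_lt_card (s := {i, j})
    (t := Finset.univ) ((Finset.card_le_two).trans_lt hcard)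
  simp only [Finset.mem_insert, Finset.mem_singleton, not_or] at hl
  refine h i j l hij (Ne.symm hl.2) (Ne.symm hl.1) ?_
  rw [hv, insert_eq_of_mem (mem_insert _ _)]
  exact collinear_pair k _ _

theorem not_collinear_of_det_ne_zero {p q r : ℝ²}
    (h : (q 0 - p 0) * (r 1 - p 1) - (q 1 - p 1) * (r 0 - p 0) ≠ 0) :
    ¬Collinear ℝ {p, q, r} := by
  rw [collinear_iff_of_mem (mem_insert p _)]
  rintro ⟨v, hv⟩
  obtain ⟨s, rfl⟩ := hv q (by simp)
  obtain ⟨t, rfl⟩ := hv r (by simp)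
  apply h
  simp only [vadd_eq_add, PiLp.add_apply, PiLp.smul_apply, smul_eq_mul, add_sub_cancel_right]
  ring

theorem segment_inter_nonempty_of_lineMap_eq {𝕜 E : Type*} [Ring 𝕜] [PartialOrder 𝕜]
    [IsOrderedRing 𝕜] [AddCommGroup E] [Module 𝕜 E] {p q p' q' : E} {t t' : 𝕜}
    (ht : t ∈ Icc 0 1) (ht' : t' ∈ Icc 0 1) (h : lineMap p q t = lineMap p' q' t') :
    (segment 𝕜 p q ∩ segment 𝕜 p' q').Nonempty :=
  ⟨_, lineMap_mem_segment 𝕜 p q ht, h ▸ lineMap_mem_segment 𝕜 p' q' ht'⟩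

def crossingPairs {n : ℕ} (s : Fin n → ℝ² × ℝ²) : Set (Fin n × Fin n) :=
  {p | p.1 < p.2 ∧ ¬SharesEndpoint (s p.1) (s p.2) ∧ (segOf (s p.1) ∩ segOf (s p.2)).Nonempty}

theorem mk_mem_crossingPairs_of_lineMap_eq {n : ℕ} {s : Fin n → ℝ² × ℝ²} {i j : Fin n}
    (hij : i < j) (hs : ¬SharesEndpoint (s i) (s j)) {t t' : ℝ} (ht : t ∈ Icc 0 1)
    (ht' : t' ∈ Icc 0 1) (h : lineMap (s i).1 (s i).2 t = lineMap (s j).1 (s j).2 t') :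
    (i, j) ∈ crossingPairs s :=
  ⟨hij, hs, segment_inter_nonempty_of_lineMap_eq ht ht' h⟩

def bouquetSticks (x a b c d e : ℝ²) : Fin 7 → ℝ² × ℝ² :=
  ![(x, a), (a, b), (b, x), (x, c), (c, d), (d, e), (e, x)]

def sevenCrossingPoints : Fin 6 → ℝ² :=
  ![!₂[0, 0], !₂[0, -1], !₂[-2, 6], !₂[-1, 1], !₂[6, 5], !₂[-3, 4]]

theorem sevenCrossingPoints_not_collinear (i j k : Fin 6) (hij : i ≠ j) (hjk : j ≠ k)
    (hik : i ≠ k) :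
    ¬Collinear ℝ {sevenCrossingPoints i, sevenCrossingPoints j, sevenCrossingPoints k} := by
  apply not_collinear_of_det_ne_zero
  fin_cases i <;> fin_cases j <;> fin_cases k <;> simp_all [sevenCrossingPoints] <;> norm_num

theorem seven_le_ncard_crossingPairs_sevenCrossingPoints :
    7 ≤ (crossingPairs (bouquetSticks (sevenCrossingPoints 0) (sevenCrossingPoints 1)
      (sevenCrossingPoints 2) (sevenCrossingPoints 3) (sevenCrossingPoints 4)
      (sevenCrossingPoints 5))).ncard := by
  let S : Finset (Fin 7 × Fin 7) := {(1, 3), (1, 4), (1, 5), (1, 6), (2, 4), (2, 5), (4, 6)}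
  have hS : ↑S ⊆ crossingPairs (bouquetSticks (sevenCrossingPoints 0) (sevenCrossingPoints 1)
      (sevenCrossingPoints 2) (sevenCrossingPoints 3) (sevenCrossingPoints 4)
      (sevenCrossingPoints 5)) := by
    simp only [S, Finset.coe_insert, Finset.coe_singleton, insert_subset_iff,
      singleton_subset_iff]
    -- each pair of sticks meets at the point with these parameters along the two sticks
    refine ⟨mk_mem_crossingPairs_of_lineMap_eq (t := 1 / 5) (t' := 2 / 5) ?_ ?_ ?_ ?_ ?_,
      mk_mem_crossingPairs_of_lineMap_eq (t := 6 / 19) (t' := 1 / 19) ?_ ?_ ?_ ?_ ?_,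
      mk_mem_crossingPairs_of_lineMap_eq (t := 48 / 65) (t' := 54 / 65) ?_ ?_ ?_ ?_ ?_,
      mk_mem_crossingPairs_of_lineMap_eq (t := 3 / 13) (t' := 11 / 13) ?_ ?_ ?_ ?_ ?_,
      mk_mem_crossingPairs_of_lineMap_eq (t := 39 / 50) (t' := 2 / 25) ?_ ?_ ?_ ?_ ?_,
      mk_mem_crossingPairs_of_lineMap_eq (t := 17 / 56) (t' := 23 / 28) ?_ ?_ ?_ ?_ ?_,
      mk_mem_crossingPairs_of_lineMap_eq (t := 1 / 40) (t' := 29 / 40) ?_ ?_ ?_ ?_ ?_⟩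
    all_goals
      simp only [bouquetSticks, sevenCrossingPoints, Matrix.cons_val, mem_Icc, Fin.reduceLT]
    all_goals norm_num [SharesEndpoint, PiLp.ext_iff, Fin.forall_fin_two, lineMap_apply]
  calc 7 = (S : Set (Fin 7 × Fin 7)).ncard := (ncard_coe_finset S).symm
    _ ≤ _ := ncard_le_ncard hS

/-- There exist six points `x, a, b, c, d, e` in general position in the plane such that the
seven segments of the bouquet configuration (triangle loop `[x,a], [a,b], [b,x]` and
quadrilateral loop `[x,c], [c,d], [d,e], [e,x]`) have at least 7 crossing pairs. -/
theorem exists_bouquet_seven_sticks_seven_crossings :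
    ∃ x a b c d e : EuclideanSpace ℝ (Fin 2),
      (∀ i j : Fin 6, i ≠ j → ![x, a, b, c, d, e] i ≠ ![x, a, b, c, d, e] j) ∧
      (∀ i j k : Fin 6, i ≠ j → j ≠ k → i ≠ k →
        ¬ Collinear ℝ ({![x, a, b, c, d, e] i, ![x, a, b, c, d, e] j,
          ![x, a, b, c, d, e] k} : Set (EuclideanSpace ℝ (Fin 2)))) ∧
      7 ≤ ({p : Fin 7 × Fin 7 | p.1 < p.2 ∧
        ¬ SharesEndpoint (![(x, a), (a, b), (b, x), (x, c), (c, d), (d, e), (e, x)] p.1)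
          (![(x, a), (a, b), (b, x), (x, c), (c, d), (d, e), (e, x)] p.2) ∧
        (segOf (![(x, a), (a, b), (b, x), (x, c), (c, d), (d, e), (e, x)] p.1) ∩
          segOf (![(x, a), (a, b), (b, x), (x, c), (c, d), (d, e), (e, x)] p.2)).Nonempty}).ncard :=
  ⟨!₂[0, 0], !₂[0, -1], !₂[-2, 6], !₂[-1, 1], !₂[6, 5], !₂[-3, 4],
    fun _ _ hij => (Function.Injective.of_forall_not_collinear (by simp)
      sevenCrossingPoints_not_collinear).ne hij,
    sevenCrossingPoints_not_collinear, seven_le_ncard_crossingPairs_sevenCrossingPoints⟩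
end
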